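/- arXiv:2511.05739 — 2 statements merged into one kernel-verified Lean document; each statement's English description precedes it below -/
import Mathlib

section
/- A type A is ●-modal if and only if the type σ → A has exactly one element; precisely, the canonical map η• : A → ●A is bijective if and only if (σ → A) is nonempty and a subsingleton. -/
/-!
Every point of `●A` is either `η• a` or the apex `[inr s]`, which exists only under `σ`; so `η•`
is surjective iff `σ → A` is inhabited. By encode–decode, `η• a = η• b` iff `σ ∨ a = b`; so `η•`
is injective iff any two elements of `A` agree under `σ`, i.e. iff `σ → A` is a subsingleton.
-/


universe u

variable (σ : Prop) (A : Type u)

def closedRel (σ : Prop) (A : Type u) : (A ⊕ PLift σ) → (A ⊕ PLift σ) → Prop :=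
  fun x y => (∃ a : A, x = Sum.inl a) ∧ (∃ s : PLift σ, y = Sum.inr s)

def ClosedMod (σ : Prop) (A : Type u) : Type u := Quot (closedRel σ A)

def etaBullet (σ : Prop) (A : Type u) (a : A) : ClosedMod σ A :=
  Quot.mk (closedRel σ A) (Sum.inl a)

theorem subsingleton_imp_iff {p : Prop} {α : Sort*} :
    Subsingleton (p → α) ↔ ∀ a b : α, p → a = b :=
  ⟨fun _ a b hp => congrFun (Subsingleton.elim (fun _ => a) (fun _ => b)) hp,
    fun h => ⟨fun _ _ => funext fun hp => h _ _ hp⟩⟩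

namespace ClosedMod

variable {σ A}

def apex (s : σ) : ClosedMod σ A :=
  Quot.mk (closedRel σ A) (Sum.inr ⟨s⟩)

theorem etaBullet_eq_apex (s : σ) (a : A) : etaBullet σ A a = apex s :=
  Quot.sound ⟨⟨a, rfl⟩, ⟨⟨s⟩, rfl⟩⟩

/-- Well defined because glueing to the apex needs a proof of `σ`, which makes `σ ∨ a = b` true. -/
def code (a : A) : ClosedMod σ A → Prop :=
  Quot.lift (Sum.elim (fun b => σ ∨ a = b) (fun _ => True)) <| by
    rintro _ _ ⟨⟨b, rfl⟩, ⟨⟨s⟩, rfl⟩⟩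
    exact propext (iff_true_intro (Or.inl s))

theorem etaBullet_eq_etaBullet_iff {a b : A} : etaBullet σ A a = etaBullet σ A b ↔ σ ∨ a = b := by
  refine ⟨fun h => (congrArg (code a) h).mp (Or.inr rfl), ?_⟩
  rintro (s | rfl)
  · rw [etaBullet_eq_apex s, etaBullet_eq_apex s]
  · rfl

theorem etaBullet_injective_iff : Function.Injective (etaBullet σ A) ↔ Subsingleton (σ → A) := by
  simp only [subsingleton_imp_iff, Function.Injective, etaBullet_eq_etaBullet_iff, or_imp,
    imp_self, and_true]

theorem etaBullet_surjective_iff : Function.Surjective (etaBullet σ A) ↔ Nonempty (σ → A) := by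
  refine ⟨fun h => ⟨fun s => (h (apex s)).choose⟩, fun ⟨f⟩ => ?_⟩
  rintro ⟨a | s⟩
  · exact ⟨a, rfl⟩
  · exact ⟨f s.down, etaBullet_eq_apex s.down (f s.down)⟩

end ClosedMod

theorem closedModal_iff_unique (σ : Prop) (A : Type u) :
    Function.Bijective (etaBullet σ A) ↔
      (Nonempty (σ → A) ∧ Subsingleton (σ → A)) := by
  rw [Function.Bijective, ClosedMod.etaBullet_injective_iff, ClosedMod.etaBullet_surjective_iff,
    and_comm]
end

section
/- Jibladze's formula for the initial algebra of lifting, classically: the type ω := {f : ℕ → Prop // (∀ n, f (n+1) → f n) ∧ ∀ p : Prop, (∀ n, (f n → p) → p) → p} is equivalent to ℕ, via sending n : ℕ to the chain (fun k => k < n). -/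
def Omega : Type :=
  {f : ℕ → Prop // (∀ n, f (n + 1) → f n) ∧ ∀ p : Prop, (∀ n, (f n → p) → p) → p}

def Omega.ofNat (n : ℕ) : Omega :=
  ⟨fun k => k < n,
    fun _ h => Nat.lt_of_succ_lt h,
    fun _ h => h n (fun hlt => absurd hlt (Nat.lt_irrefl n))⟩

/-!
A chain `f : Omega` is a downward closed set of naturals, and the induction condition at
`p := False` says that `f` fails somewhere. Hence `f` is the initial segment below the first
index where it fails, i.e. `f = ofNat n` for that least `n`.
-/

theorem Nat.lt_find_not_iff {P : ℕ → Prop} [DecidablePred P] (hP : Antitone P)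
    (h : ∃ n, ¬P n) (k : ℕ) : k < Nat.find h ↔ P k := by
  simp only [Nat.lt_find_iff, not_not]
  exact ⟨fun hle => hle k le_rfl, fun hk _ hm => hP hm hk⟩

namespace Omega

theorem antitone (f : Omega) : Antitone f.1 :=
  antitone_nat_of_succ_le f.2.1

theorem exists_not (f : Omega) : ∃ n, ¬f.1 n := by
  by_contra hall
  exact f.2.2 False fun n hn => hn (not_not.mp (not_exists.mp hall n))

open Classical in
noncomputable def toNat (f : Omega) : ℕ :=
  Nat.find f.exists_not

open Classical in
theorem ofNat_toNat (f : Omega) : ofNat f.toNat = f :=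
  Subtype.ext <| funext fun k => propext <| Nat.lt_find_not_iff f.antitone f.exists_not k

theorem ofNat_injective : Function.Injective ofNat := fun _ _ h =>
  eq_of_forall_lt_iff fun k => iff_of_eq (congrFun (congrArg Subtype.val h) k)

end Omega

theorem omega_equiv_nat :
    ∃ e : Omega ≃ ℕ, ∀ n : ℕ, e.symm n = Omega.ofNat n :=
  ⟨{ toFun := Omega.toNat
     invFun := Omega.ofNat
     left_inv := Omega.ofNat_toNat
     right_inv := fun n => Omega.ofNat_injective (Omega.ofNat_toNat (Omega.ofNat n)) },
    fun _ => rfl⟩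
end
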